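/- Let S be a semigroupoid, (α,X) a global action of S on X, and R the smallest equivalence relation on S containing the relation ∼ defined by: s ∼ t iff s = t, or S^s = S^t ≠ ∅, or s = ut for some u with (u,t) ∈ S⁽²⁾. Then s R t implies ₛX = ₜX. -/

import Mathlib

universe u v w

/-- An (Exel) semigroupoid: a set `S` with a set of composable pairs (encoded by
the relation `comp`) and a multiplication, associative in Exel's sense. -/
structure Semigroupoid (S : Type u) where
  comp : S → S → Prop
  mul : S → S → S
  assoc : ∀ s t r : S,
    ((comp s t ∧ comp t r) ∨ (comp s t ∧ comp (mul s t) r) ∨ (comp t r ∧ comp s (mul t r))) →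
      comp s t ∧ comp t r ∧ comp (mul s t) r ∧ comp s (mul t r) ∧
        mul (mul s t) r = mul s (mul t r)

namespace Semigroupoid

variable {S : Type u} {X : Type v}

/-- `S^s = {t | (s,t) ∈ S⁽²⁾}`. -/
def rightComp (G : Semigroupoid S) (s : S) : Set S := {t | G.comp s t}

/-- `X_s = α_s(ₛX)`. -/
def img (dom : S → Set X) (act : S → X → X) (s : S) : Set X := act s '' dom s

/-- Condition (P1): `α_t⁻¹(ₛX ∩ X_t) = ₜX ∩ ₛₜX` for composable `(s,t)`. -/
def P1 (G : Semigroupoid S) (dom : S → Set X) (act : S → X → X) : Prop :=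
  ∀ s t : S, G.comp s t →
    {x | x ∈ dom t ∧ act t x ∈ dom s ∩ img dom act t} = dom t ∩ dom (G.mul s t)

/-- Condition (P2): `α_s ∘ α_t = α_{st}` on `ₜX ∩ ₛₜX` for composable `(s,t)`. -/
def P2 (G : Semigroupoid S) (dom : S → Set X) (act : S → X → X) : Prop :=
  ∀ s t : S, G.comp s t → ∀ x ∈ dom t ∩ dom (G.mul s t),
    act s (act t x) = act (G.mul s t) x

/-- A partial action of the semigroupoid on `X`. -/
def IsPartialAction (G : Semigroupoid S) (dom : S → Set X) (act : S → X → X) : Prop :=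
  P1 G dom act ∧ P2 G dom act

/-- Condition (G1): if `S^s = S^t ≠ ∅` then `ₛX = ₜX`. -/
def G1 (G : Semigroupoid S) (dom : S → Set X) : Prop :=
  ∀ s t : S, G.rightComp s = G.rightComp t → (G.rightComp s).Nonempty → dom s = dom t

/-- Condition (G2): if `(s,t) ∈ S⁽²⁾` then `ₜX = ₛₜX`. -/
def G2 (G : Semigroupoid S) (dom : S → Set X) : Prop :=
  ∀ s t : S, G.comp s t → dom t = dom (G.mul s t)

/-- A global action of the semigroupoid on `X`. -/
def IsGlobalAction (G : Semigroupoid S) (dom : S → Set X) (act : S → X → X) : Prop :=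
  IsPartialAction G dom act ∧ G1 G dom ∧ G2 G dom

/-- A partial action is non-degenerate when `X = ⋃ₛ (ₛX ∪ X_s)`. -/
def Nondegenerate (G : Semigroupoid S) (dom : S → Set X) (act : S → X → X) : Prop :=
  (⋃ s : S, dom s ∪ img dom act s) = Set.univ

section Morphisms

variable {Y : Type w}

/-- A morphism of partial actions `φ : (α,X) → (β,Y)`. -/
def IsMorphism (G : Semigroupoid S) (domX : S → Set X) (actX : S → X → X)
    (domY : S → Set Y) (actY : S → Y → Y) (φ : X → Y) : Prop :=
  ∀ s : S, (∀ x ∈ domX s, φ x ∈ domY s) ∧ (∀ x ∈ domX s, φ (actX s x) = actY s (φ x))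

/-- An embedding of partial actions. -/
def IsEmbedding (G : Semigroupoid S) (domX : S → Set X) (actX : S → X → X)
    (domY : S → Set Y) (actY : S → Y → Y) (φ : X → Y) : Prop :=
  Function.Injective φ ∧ IsMorphism G domX actX domY actY φ ∧
    ∀ s : S, domX s = {x | φ x ∈ domY s ∧ actY s (φ x) ∈ Set.range φ}

end Morphisms

/-- The relation `∼` on `S`: `s ∼ t` iff `s = t`, or `S^s = S^t ≠ ∅`, or `s = ut`. -/
def simRel (G : Semigroupoid S) (s t : S) : Prop :=
  s = t ∨ (G.rightComp s = G.rightComp t ∧ (G.rightComp s).Nonempty) ∨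
    ∃ u : S, G.comp u t ∧ s = G.mul u t

/-- `R`: the smallest equivalence relation containing `∼`. -/
def Rrel (G : Semigroupoid S) : S → S → Prop := Relation.EqvGen (simRel G)

/-- `₍ρₛ₎X = ⋃ ({ₜX : t R s} ∪ {X_t : t ∈ S^s})`. -/
def rhoDom (G : Semigroupoid S) (dom : S → Set X) (act : S → X → X) (s : S) : Set X :=
  {x | (∃ t : S, Rrel G t s ∧ x ∈ dom t) ∨ (∃ t : S, G.comp s t ∧ x ∈ img dom act t)}

/-- The set `D ⊆ S^δ × X`, where `S^δ = S ∪ {δ}` is encoded as `Option S`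
(with `none` playing the role of the extra symbol `δ`). -/
def DSet (G : Semigroupoid S) (dom : S → Set X) (act : S → X → X) : Set (Option S × X) :=
  {p | ∀ s : S, p.1 = some s → p.2 ∈ rhoDom G dom act s}

theorem noneMem (G : Semigroupoid S) (dom : S → Set X) (act : S → X → X) (x : X) :
    ((none : Option S), x) ∈ DSet G dom act := by
  intro s h
  exact absurd h (by simp)

/-- Generating relation for `≈`:
(1) `(δ, α_s x) ∼ (s, x)` for `x ∈ ₛX`;
(2) `(tu, x) ∼ (t, α_u x)` for `u ∈ S^t` and `x ∈ ᵤX`. -/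
def preRel (G : Semigroupoid S) (dom : S → Set X) (act : S → X → X) :
    Option S × X → Option S × X → Prop := fun p q =>
  (∃ (s : S) (x : X), x ∈ dom s ∧ p = (none, act s x) ∧ q = (some s, x)) ∨
  (∃ (t u : S) (x : X), G.comp t u ∧ x ∈ dom u ∧
      p = (some (G.mul t u), x) ∧ q = (some t, act u x))

/-- `≈`: the smallest equivalence relation containing the generating relation. -/
def approx (G : Semigroupoid S) (dom : S → Set X) (act : S → X → X) :
    Option S × X → Option S × X → Prop :=
  Relation.EqvGen (preRel G dom act)

/-- The setoid on `D` induced by `≈`. -/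
def DSetoid (G : Semigroupoid S) (dom : S → Set X) (act : S → X → X) :
    Setoid (DSet G dom act) :=
  Setoid.comap Subtype.val (Relation.EqvGen.setoid (preRel G dom act))

/-- `E = D/≈`. -/
def EType (G : Semigroupoid S) (dom : S → Set X) (act : S → X → X) : Type _ :=
  Quotient (DSetoid G dom act)

/-- The class `[a,x] ∈ E` of `(a,x) ∈ D`. -/
def mkE (G : Semigroupoid S) (dom : S → Set X) (act : S → X → X)
    (p : DSet G dom act) : EType G dom act :=
  Quotient.mk (DSetoid G dom act) p

/-- `ₛE = {[a,x] : (a,x) ≈ (t,y) for some t ∈ S^s} ∪ {[δ,x] : x ∈ ₍ρₛ₎X}`. -/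
def domE (G : Semigroupoid S) (dom : S → Set X) (act : S → X → X) (s : S) :
    Set (EType G dom act) :=
  {e | (∃ (p : DSet G dom act) (t : S) (y : X),
          G.comp s t ∧ approx G dom act p.val (some t, y) ∧ e = mkE G dom act p) ∨
       (∃ x : X, x ∈ rhoDom G dom act s ∧
          e = mkE G dom act ⟨(none, x), noneMem G dom act x⟩)}

/-- `δ : X → E`, `x ↦ [δ,x]`. -/
def deltaMap (G : Semigroupoid S) (dom : S → Set X) (act : S → X → X) (x : X) :
    EType G dom act :=
  mkE G dom act ⟨(none, x), noneMem G dom act x⟩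

theorem dom_eq_of_simRel {G : Semigroupoid S} {dom : S → Set X} (hG1 : G1 G dom)
    (hG2 : G2 G dom) {s t : S} (hst : simRel G s t) : dom s = dom t := by
  rcases hst with rfl | ⟨hcomp, hne⟩ | ⟨u, hut, rfl⟩
  · rfl
  · exact hG1 s t hcomp hne
  · exact (hG2 u t hut).symm

theorem dom_eq_of_rrel {G : Semigroupoid S} {dom : S → Set X} (hG1 : G1 G dom)
    (hG2 : G2 G dom) {s t : S} (hst : Rrel G s t) : dom s = dom t :=
  have hker : Equivalence fun a b : S => dom a = dom b := ⟨fun _ => rfl, Eq.symm, Eq.trans⟩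
  hker.eqvGen_iff.mp (hst.mono fun _ _ => dom_eq_of_simRel hG1 hG2)

end Semigroupoid

open Semigroupoid in
/-- If `(α,X)` is a global action and `s R t`, then `ₛX = ₜX`. -/
theorem statement9 {S : Type u} {X : Type v} (G : Semigroupoid S)
    (dom : S → Set X) (act : S → X → X) (hα : IsGlobalAction G dom act)
    (s t : S) (h : Rrel G s t) :
    dom s = dom t :=
  dom_eq_of_rrel hα.2.1 hα.2.2 h
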